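/- arXiv:1710.04821 — 3 statements merged into one kernel-verified Lean document; each statement's English description precedes it below -/
import Mathlib

section
/- Let H₀ > 0, ε ≥ 0, and let f : (0, 1/(4H₀)) → [0,∞) be a nondecreasing locally absolutely continuous function and M ≥ 0 a constant such that for almost every s ∈ (0, 1/(4H₀)), f(s) ≤ s·f'(s) + 2H₀·s·f(s) + ε·M. Then for almost every such s, the function s ↦ (1 + 4H₀ s)·f(s)/s − 2ε·M/s has nonnegative derivative, and consequently for all 0 < s < t < 1/(4H₀): (1 + 4H₀ s)·f(s)/s − 2ε·M/s ≤ (1 + 4H₀ t)·f(t)/t − 2ε·M/t. -/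
/-! Multiplying the hypothesis by `1 + 4H₀s` and using `4H₀s ≤ 1` absorbs the term `2H₀s·f(s)`:
`f(s) ≤ (1 + 4H₀s)·s·f'(s) + 2εM`, which is exactly the nonnegativity of the derivative of
`g(s) = (1 + 4H₀s)·f(s)/s − 2εM/s`. As `f` is monotone, `f'` is integrable on compact
subintervals, so `f`, and with it `g`, is absolutely continuous there; hence
`g(t) − g(s) = ∫ₛᵗ g' ≥ 0`. -/

open MeasureTheory Set intervalIntegral

theorem AbsolutelyContinuousOnInterval.congr {X : Type*} [PseudoMetricSpace X] {f g : ℝ → X}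
    {a b : ℝ} (hf : AbsolutelyContinuousOnInterval f a b) (hfg : EqOn f g (uIcc a b)) :
    AbsolutelyContinuousOnInterval g a b := by
  refine hf.congr' ?_
  filter_upwards [Filter.mem_inf_of_right (Filter.mem_principal_self _)] with E hE
  exact Finset.sum_congr rfl fun i hi => by rw [hfg (hE.1 i hi).1, hfg (hE.1 i hi).2]

theorem absolutelyContinuousOnInterval_of_sub_eq_integral {f φ : ℝ → ℝ} {a b : ℝ}
    (hφ : IntervalIntegrable φ volume a b)
    (hf : ∀ x ∈ uIcc a b, f x - f a = ∫ u in a..x, φ u) :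
    AbsolutelyContinuousOnInterval f a b := by
  have hconst : AbsolutelyContinuousOnInterval (fun _ => f a) a b :=
    contDiffOn_const.absolutelyContinuousOnInterval
  refine (hconst.add (hφ.absolutelyContinuousOnInterval_intervalIntegral left_mem_uIcc)).congr ?_
  intro x hx
  simp [← hf x hx]

theorem AbsolutelyContinuousOnInterval.le_of_ae_deriv_nonneg {g : ℝ → ℝ} {a b : ℝ}
    (hg : AbsolutelyContinuousOnInterval g a b) (hab : a ≤ b)
    (hg' : ∀ᵐ x ∂volume.restrict (Icc a b), 0 ≤ deriv g x) : g a ≤ g b := by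
  have := integral_nonneg_of_ae_restrict hab hg'
  rw [hg.integral_deriv_eq_sub] at this
  linarith

theorem AbsolutelyContinuousOnInterval.affine_mul_div_sub_div {f : ℝ → ℝ} {a b : ℝ}
    (hf : AbsolutelyContinuousOnInterval f a b) (h0 : (0 : ℝ) ∉ uIcc a b) (c K : ℝ) :
    AbsolutelyContinuousOnInterval (fun x => (1 + c * x) * f x / x - K / x) a b := by
  have hne : ∀ x ∈ uIcc a b, x ≠ 0 := fun x hx hx0 => h0 (hx0 ▸ hx)
  have hl : AbsolutelyContinuousOnInterval (fun x => (1 + c * x) / x) a b :=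
    ContDiffOn.absolutelyContinuousOnInterval (by fun_prop (disch := exact hne))
  have hr : AbsolutelyContinuousOnInterval (fun x => K / x) a b :=
    ContDiffOn.absolutelyContinuousOnInterval (by fun_prop (disch := exact hne))
  refine ((hl.fun_mul hf).sub hr).congr fun x _ => ?_
  simp only [Pi.sub_apply]
  ring

theorem hasDerivAt_affine_mul_div_sub_div {f : ℝ → ℝ} {f' s : ℝ} (hf : HasDerivAt f f' s)
    (hs : s ≠ 0) (c K : ℝ) :
    HasDerivAt (fun x => (1 + c * x) * f x / x - K / x)
      (((1 + c * s) * (s * f') + K - f s) / s ^ 2) s := by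
  have hl : HasDerivAt (fun x => 1 + c * x) c s := by
    simpa using ((hasDerivAt_id s).const_mul c).const_add 1
  have hK : HasDerivAt (fun x => K / x) (-(K / s ^ 2)) s := by
    simpa [div_eq_mul_inv] using (hasDerivAt_inv hs).const_mul K
  refine (((hl.fun_mul hf).fun_div (hasDerivAt_id' s) hs).fun_sub hK).congr_deriv ?_
  field_simp
  ring

theorem le_one_add_four_mul_mul_add_two_mul {y d e h : ℝ} (hy : 0 ≤ y) (he : 0 ≤ e)
    (hh : 0 ≤ h) (hh4 : 4 * h ≤ 1) (hyd : y ≤ d + 2 * h * y + e) :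
    y ≤ (1 + 4 * h) * d + 2 * e := by
  nlinarith [mul_le_mul_of_nonneg_left hyd (by linarith : 0 ≤ 1 + 4 * h),
    mul_nonneg (mul_nonneg hh hy) (sub_nonneg.2 hh4), mul_nonneg he (sub_nonneg.2 hh4)]

/-- Let `H₀ > 0`, `ε ≥ 0`, `M ≥ 0` and let `f` be a nondecreasing, locally absolutely
continuous (encoded by the FTC hypothesis `hftc`) nonnegative function on `(0, 1/(4H₀))`
such that for a.e. `s` there, `f(s) ≤ s·f'(s) + 2H₀·s·f(s) + ε·M`.  Then for a.e. such `s`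
the function `s ↦ (1+4H₀s)·f(s)/s − 2εM/s` has nonnegative derivative, and for all
`0 < s < t < 1/(4H₀)` one has
`(1+4H₀s)·f(s)/s − 2εM/s ≤ (1+4H₀t)·f(t)/t − 2εM/t`. -/
theorem stmt_5 (H₀ ε M : ℝ) (f : ℝ → ℝ) (hH : 0 < H₀) (hε : 0 ≤ ε) (hM : 0 ≤ M)
    (hmono : MonotoneOn f (Set.Ioo 0 (1 / (4 * H₀))))
    (hnonneg : ∀ s ∈ Set.Ioo (0:ℝ) (1 / (4 * H₀)), 0 ≤ f s)
    (hftc : ∀ a b : ℝ, 0 < a → a ≤ b → b < 1 / (4 * H₀) →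
      f b - f a = ∫ s in a..b, deriv f s)
    (hae : ∀ᵐ s ∂(MeasureTheory.volume.restrict (Set.Ioo (0:ℝ) (1 / (4 * H₀)))),
      DifferentiableAt ℝ f s ∧ f s ≤ s * deriv f s + 2 * H₀ * s * f s + ε * M) :
    (∀ᵐ s ∂(MeasureTheory.volume.restrict (Set.Ioo (0:ℝ) (1 / (4 * H₀)))),
      0 ≤ deriv (fun s : ℝ => (1 + 4 * H₀ * s) * f s / s - 2 * ε * M / s) s) ∧
    ∀ s t : ℝ, 0 < s → s < t → t < 1 / (4 * H₀) →
      (1 + 4 * H₀ * s) * f s / s - 2 * ε * M / s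
        ≤ (1 + 4 * H₀ * t) * f t / t - 2 * ε * M / t := by
  have hderiv : ∀ᵐ s ∂volume.restrict (Ioo 0 (1 / (4 * H₀))),
      0 ≤ deriv (fun s : ℝ => (1 + 4 * H₀ * s) * f s / s - 2 * ε * M / s) s := by
    filter_upwards [hae, ae_restrict_mem measurableSet_Ioo] with s ⟨hdf, hineq⟩ hs
    have h4 : 4 * (H₀ * s) ≤ 1 := by
      have := (lt_div_iff₀ (by positivity)).1 hs.2
      linarith
    have key := le_one_add_four_mul_mul_add_two_mul (hnonneg s hs) (mul_nonneg hε hM)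
      (mul_pos hH hs.1).le h4 (d := s * deriv f s) (by linarith)
    rw [(hasDerivAt_affine_mul_div_sub_div hdf.hasDerivAt hs.1.ne' _ _).deriv]
    exact div_nonneg (by linarith) (by positivity)
  refine ⟨hderiv, fun s t hs hst htT => ?_⟩
  have hst' : uIcc s t = Icc s t := uIcc_of_le hst.le
  have hsub : uIcc s t ⊆ Ioo 0 (1 / (4 * H₀)) :=
    hst' ▸ fun x hx => ⟨hs.trans_le hx.1, hx.2.trans_lt htT⟩
  have hf : AbsolutelyContinuousOnInterval f s t :=
    absolutelyContinuousOnInterval_of_sub_eq_integral (hmono.mono hsub).intervalIntegrable_deriv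
      fun x hx => hftc s x hs (hst' ▸ hx).1 (hsub hx).2
  exact (hf.affine_mul_div_sub_div (notMem_uIcc_of_lt hs (hs.trans hst)) _ _).le_of_ae_deriv_nonneg
    hst.le (ae_restrict_of_ae_restrict_of_subset (hst' ▸ hsub) hderiv)
end

section
/- Let X ⊂ ℝ^(n+1) be a nonempty compact set and σ : X → Sⁿ a continuous map with σ(y) ∈ N_y X for all y ∈ X. For α ∈ (0, π/2) define N^α X/σ = ⋃_{y∈X} { ν ∈ N_y X : σ(y)·ν ≥ sin α }. Then N^α X/σ is a closed subset of Sⁿ. -/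
/-! The set is the projection to the second factor of a closed subset of `X × E`: every defining
condition is closed in the pair `(y, ν)`, the last one because `σ` is continuous on the closed set
`X`. Projecting along a compact factor is a closed map. -/

open Set

theorem IsCompact.isClosed_biUnion_of_isClosed_prod {α β : Type*} [TopologicalSpace α]
    [TopologicalSpace β] {K : Set α} (hK : IsCompact K) {T : α → Set β}
    (hT : IsClosed {p : α × β | p.1 ∈ K ∧ p.2 ∈ T p.1}) :
    IsClosed (⋃ y ∈ K, T y) := by
  have : CompactSpace K := isCompact_iff_compactSpace.mp hK
  have hT' : IsClosed {p : K × β | p.2 ∈ T p.1} := by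
    convert hT.preimage (continuous_subtype_val.prodMap continuous_id) using 1
    ext p
    simp
  convert isClosedMap_snd_of_compactSpace _ hT' using 1
  ext ν
  simp

theorem isClosed_setOf_forall_inner_sub_nonpos {E : Type*} [NormedAddCommGroup E]
    [InnerProductSpace ℝ E] (X : Set E) :
    IsClosed {p : E × E | ∀ x ∈ X, inner ℝ p.2 (x - p.1) ≤ 0} := by
  simp only [ofPred_forall]
  exact isClosed_biInter fun x _ ↦ isClosed_le
    (continuous_snd.inner (continuous_const.sub continuous_fst)) continuous_const

theorem stmt_10_general (n : ℕ) (X : Set (EuclideanSpace ℝ (Fin (n+1))))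
    (hcp : IsCompact X)
    (σ : EuclideanSpace ℝ (Fin (n+1)) → EuclideanSpace ℝ (Fin (n+1)))
    (hσc : ContinuousOn σ X)
    (α : ℝ) :
    IsClosed (⋃ y ∈ X, {ν : EuclideanSpace ℝ (Fin (n+1)) |
      ν ∈ Metric.sphere (0 : EuclideanSpace ℝ (Fin (n+1))) 1 ∧
      (∀ x ∈ X, (inner ℝ ν (x - y) : ℝ) ≤ 0) ∧
      Real.sin α ≤ (inner ℝ (σ y) ν : ℝ)}) := by
  apply hcp.isClosed_biUnion_of_isClosed_prod
  have hangle : IsClosed (X ×ˢ univ ∩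
      (fun p : _ × _ ↦ inner ℝ (σ p.1) p.2) ⁻¹' Ici (Real.sin α)) :=
    ContinuousOn.preimage_isClosed_of_isClosed
      ((hσc.comp continuousOn_fst fun _ hp ↦ hp.1).inner continuousOn_snd)
      (hcp.isClosed.prod isClosed_univ) isClosed_Ici
  convert (hangle.inter (Metric.isClosed_sphere.preimage continuous_snd)).inter
    (isClosed_setOf_forall_inner_sub_nonpos X) using 1
  ext p
  simp only [mem_ofPred_eq, mem_inter_iff, mem_prod, mem_univ, mem_preimage, mem_Ici]
  tauto

/-- Let `X ⊂ ℝ^(n+1)` be a nonempty compact set and `σ` a continuous map on `X` with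
`σ(y) ∈ N_y X` for all `y ∈ X`.  For `α ∈ (0, π/2)`, the restricted normal set
`N^α X/σ = ⋃_{y∈X} {ν ∈ N_y X : σ(y)·ν ≥ sin α}` is a closed subset of `Sⁿ`. -/
theorem stmt_10 (n : ℕ) (X : Set (EuclideanSpace ℝ (Fin (n+1))))
    (hne : X.Nonempty) (hcp : IsCompact X)
    (σ : EuclideanSpace ℝ (Fin (n+1)) → EuclideanSpace ℝ (Fin (n+1)))
    (hσc : ContinuousOn σ X)
    (hσ : ∀ y ∈ X, σ y ∈ Metric.sphere (0 : EuclideanSpace ℝ (Fin (n+1))) 1 ∧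
      ∀ x ∈ X, (inner ℝ (σ y) (x - y) : ℝ) ≤ 0)
    (α : ℝ) (hα : α ∈ Set.Ioo 0 (Real.pi / 2)) :
    IsClosed (⋃ y ∈ X, {ν : EuclideanSpace ℝ (Fin (n+1)) |
      ν ∈ Metric.sphere (0 : EuclideanSpace ℝ (Fin (n+1))) 1 ∧
      (∀ x ∈ X, (inner ℝ ν (x - y) : ℝ) ≤ 0) ∧
      Real.sin α ≤ (inner ℝ (σ y) ν : ℝ)}) :=
  stmt_10_general n X hcp σ hσc α
end

section
/- Let X ⊂ ℝ^(n+1) be a nonempty compact set and σ : X → Sⁿ a continuous map with σ(y) ∈ N_y X for all y. Then the restricted normal cone NX/σ = ⋃_{y∈X}{ ν ∈ N_y X : σ(y)·ν > 0 } satisfies Hⁿ(NX/σ) ≥ (1/2)·Hⁿ(Sⁿ). -/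
open MeasureTheory Metric Set Filter Topology Module
open scoped NNReal ENNReal RealInnerProductSpace

/-!
First let `X = F` be finite. The cones `N_y F`, `y ∈ F`, cover the sphere and two of them meet
only inside a great sphere `(y - y')ᗮ`, which is `Hⁿ`-null. Within one cone, with `u = σ y`, the
reflection in `uᗮ` carries the half `⟪u, ·⟫ ≤ 0` into the half `⟪u, ·⟫ ≥ 0`, and
`ν ↦ (ν + δu) / ‖ν + δu‖` carries that half into `⟪u, ·⟫ ≥ δ / (1 + δ)` with a
`(1 + 3δ)`-Lipschitz inverse. Hence `Hⁿ(Sⁿ) ≤ 2 (1 + 3δ)ⁿ Hⁿ(A_F)` for the closed set `A_F` of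
normals with `⟪σ y, ν⟫ ≥ δ / (1 + δ)`. For finite sets exhausting a dense sequence of `X`,
compactness of `X` and continuity of `σ` put the limsup of the `A_F` inside `NX/σ`; reverse
Fatou for sets and `δ → 0` conclude.
-/

lemma abs_sqrt_sub_sqrt_le {a b : ℝ} (ha : 1 / 4 ≤ a) (hb : 1 / 4 ≤ b) :
    |√a - √b| ≤ |a - b| := by
  have hsa : 1 / 2 ≤ √a := Real.le_sqrt_of_sq_le (by linarith)
  have hsb : 1 / 2 ≤ √b := Real.le_sqrt_of_sq_le (by linarith)
  have hab : a - b = (√a - √b) * (√a + √b) := by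
    rw [mul_comm, ← sq_sub_sq, Real.sq_sqrt (by linarith), Real.sq_sqrt (by linarith)]
  rw [hab, abs_mul, abs_of_pos (by linarith : 0 < √a + √b)]
  exact le_mul_of_one_le_right (abs_nonneg _) (by linarith)

lemma MeasureTheory.le_measure_limsup_atTop {α : Type*} [MeasurableSpace α] {μ : Measure α}
    {s : ℕ → Set α} {c : ℝ≥0∞} (hs : ∀ k, NullMeasurableSet (s k) μ)
    (hfin : μ (⋃ k, s k) ≠ ⊤) (hc : ∀ k, c ≤ μ (s k)) : c ≤ μ (limsup s atTop) := by
  rw [limsup_eq_iInf_iSup_of_nat]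
  have hanti : Antitone fun n => ⋃ i ≥ n, s i := fun m n hmn =>
    biUnion_mono (fun i (hi : n ≤ i) => hmn.trans hi) fun _ _ => subset_rfl
  refine ge_of_tendsto' (tendsto_measure_iInter_atTop
    (fun n => .iUnion fun i => .iUnion fun _ => hs i) hanti
    ⟨0, ne_top_of_le_ne_top hfin (measure_mono (iUnion₂_subset fun i _ => subset_iUnion s i))⟩)
    fun n => (hc n).trans (measure_mono (subset_biUnion_of_mem (le_refl n)))

lemma ENNReal.le_of_eventually_le_ofReal_one_add_mul_rpow_mul {a b : ℝ≥0∞} {c d : ℝ}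
    (h : ∀ᶠ δ in 𝓝[>] 0, a ≤ ENNReal.ofReal (1 + c * δ) ^ d * b) : a ≤ b := by
  have hcont : Continuous fun δ : ℝ => ENNReal.ofReal (1 + c * δ) ^ d :=
    (ENNReal.continuous_rpow_const.comp ENNReal.continuous_ofReal).comp (by fun_prop)
  have h1 := (hcont.tendsto 0).mono_left (nhdsWithin_le_nhds (s := Ioi 0))
  simp only [mul_zero, add_zero, ENNReal.ofReal_one, ENNReal.one_rpow] at h1
  exact ge_of_tendsto (by simpa using ENNReal.Tendsto.mul_const h1 (Or.inl one_ne_zero)) h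

lemma TopologicalSpace.IsSeparable.exists_seq_dense {α : Type*} [TopologicalSpace α]
    [PseudoMetrizableSpace α] {s : Set α} (hs : IsSeparable s) (hne : s.Nonempty) :
    ∃ x : ℕ → α, (∀ i, x i ∈ s) ∧ s ⊆ closure (range x) := by
  obtain ⟨t, hts, htc, hst⟩ := hs.exists_countable_dense_subset
  obtain ⟨x, rfl⟩ := htc.exists_eq_range (closure_nonempty_iff.1 (hne.mono hst))
  exact ⟨x, fun i => hts (mem_range_self i), hst⟩

section InnerProductSpace

variable {E : Type*} [NormedAddCommGroup E] [InnerProductSpace ℝ E]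

lemma lipschitzOnWith_normalize :
    LipschitzOnWith 2 (fun x : E => ‖x‖⁻¹ • x) {x | 1 ≤ ‖x‖} := by
  refine LipschitzOnWith.of_dist_le_mul fun x (hx : 1 ≤ ‖x‖) y (hy : 1 ≤ ‖y‖) => ?_
  have hx0 : 0 < ‖x‖ := one_pos.trans_le hx
  have hy0 : 0 < ‖y‖ := one_pos.trans_le hy
  have h1 : ‖‖x‖⁻¹ • (x - y)‖ ≤ ‖x - y‖ := by
    rw [norm_smul, norm_inv, norm_norm]
    exact mul_le_of_le_one_left (norm_nonneg _) (inv_le_one_of_one_le₀ hx)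
  have h2 : ‖(‖x‖⁻¹ - ‖y‖⁻¹) • y‖ ≤ ‖x - y‖ := by
    rw [norm_smul, Real.norm_eq_abs, inv_sub_inv hx0.ne' hy0.ne', abs_div,
      abs_of_pos (mul_pos hx0 hy0), div_mul_eq_mul_div, mul_div_mul_right _ _ hy0.ne']
    calc |‖y‖ - ‖x‖| / ‖x‖ ≤ |‖y‖ - ‖x‖| := div_le_self (abs_nonneg _) hx
      _ ≤ ‖x - y‖ := by rw [abs_sub_comm]; exact abs_norm_sub_norm_le x y
  calc dist (‖x‖⁻¹ • x) (‖y‖⁻¹ • y)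
      = ‖‖x‖⁻¹ • (x - y) + (‖x‖⁻¹ - ‖y‖⁻¹) • y‖ := by rw [dist_eq_norm]; congr 1; module
    _ ≤ ‖x - y‖ + ‖x - y‖ := (norm_add_le _ _).trans (add_le_add h1 h2)
    _ = (2 : ℝ≥0) * dist x y := by rw [dist_eq_norm]; push_cast; ring

lemma LipschitzOnWith.smul_self {f : E → ℝ} {s : Set E} {L M : ℝ≥0}
    (hf : LipschitzOnWith L f s) (hM : ∀ v ∈ s, |f v| ≤ M) (hs : ∀ v ∈ s, ‖v‖ ≤ 1) :
    LipschitzOnWith (M + L) (fun v => f v • v) s := by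
  refine LipschitzOnWith.of_dist_le_mul fun v hv v' hv' => ?_
  have hfd : |f v - f v'| ≤ L * ‖v - v'‖ := by
    simpa [← Real.dist_eq, ← dist_eq_norm] using hf.dist_le_mul v hv v' hv'
  calc dist (f v • v) (f v' • v')
      = ‖f v • (v - v') + (f v - f v') • v'‖ := by rw [dist_eq_norm]; congr 1; module
    _ ≤ |f v| * ‖v - v'‖ + |f v - f v'| * ‖v'‖ := by
      refine (norm_add_le _ _).trans_eq ?_
      rw [norm_smul, norm_smul, Real.norm_eq_abs, Real.norm_eq_abs]
    _ ≤ M * ‖v - v'‖ + L * ‖v - v'‖ * 1 := by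
      gcongr
      · exact hM v hv
      · exact hs v' hv'
    _ = ↑(M + L) * dist v v' := by rw [dist_eq_norm]; push_cast; ring

lemma abs_real_inner_le_one {u v : E} (hu : ‖u‖ = 1) (hv : ‖v‖ = 1) : |⟪u, v⟫| ≤ 1 :=
  (abs_real_inner_le_norm u v).trans (by rw [hu, hv, mul_one])

lemma reflection_orthogonal_singleton_apply {u : E} (hu : ‖u‖ = 1) (v : E) :
    (ℝ ∙ u)ᗮ.reflection v = v - (2 * ⟪u, v⟫) • u := by
  rw [Submodule.reflection_orthogonal_apply, Submodule.reflection_singleton_apply, hu]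
  module

section Sphere

variable [MeasurableSpace E] [BorelSpace E] [FiniteDimensional ℝ E] {n : ℕ}

lemma hausdorffMeasure_sphere_inter_orthogonal_eq_zero (hn : finrank ℝ E = n + 1) {w : E}
    (hw : w ≠ 0) :
    μH[n] (sphere (0 : E) 1 ∩ (ℝ ∙ w)ᗮ) = 0 := by
  have : Fact (finrank ℝ E = n + 1) := ⟨hn⟩
  have hK : finrank ℝ (ℝ ∙ w)ᗮ = n := Submodule.finrank_orthogonal_span_singleton hw
  have hsub : sphere (0 : E) 1 ∩ (ℝ ∙ w)ᗮ ⊆ (↑) '' sphere (0 : (ℝ ∙ w)ᗮ) 1 :=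
    fun ν ⟨hν, hνK⟩ => ⟨⟨ν, hνK⟩, by simpa using hν, rfl⟩
  refine measure_mono_null hsub ?_
  rw [isometry_subtype_coe.hausdorffMeasure_image (Or.inl n.cast_nonneg), ← hK]
  exact Measure.addHaar_sphere_of_ne_zero _ _ one_ne_zero

lemma hausdorffMeasure_sphere_inter_cap_lt_top (hn : finrank ℝ E = n + 1) {e : E} (he : ‖e‖ = 1) :
    μH[n] (sphere (0 : E) 1 ∩ {ν | 1 / 2 < ⟪e, ν⟫}) < ⊤ := by
  have : Fact (finrank ℝ E = n + 1) := ⟨hn⟩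
  have hK : finrank ℝ (ℝ ∙ e)ᗮ = n :=
    Submodule.finrank_orthogonal_span_singleton (ne_zero_of_norm_ne_zero (by simp [he]))
  set f : (ℝ ∙ e)ᗮ → E := fun x => ‖e + x‖⁻¹ • (e + x)
  have hf : LipschitzWith 2 f := by
    have hmaps : MapsTo (fun x : (ℝ ∙ e)ᗮ => e + (x : E)) univ {x | 1 ≤ ‖x‖} := by
      intro x _
      have h := norm_add_sq_eq_norm_sq_add_norm_sq_real
        (Submodule.mem_orthogonal_singleton_iff_inner_right.mp x.2)
      rw [he] at h
      show 1 ≤ ‖e + x‖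
      nlinarith [norm_nonneg (e + x), mul_self_nonneg ‖(x : E)‖]
    have h := lipschitzOnWith_univ.mp (lipschitzOnWith_normalize.comp
      ((isometry_add_left e).comp isometry_subtype_coe).lipschitz.lipschitzOnWith hmaps)
    rwa [mul_one] at h
  have hsub : sphere (0 : E) 1 ∩ {ν | 1 / 2 < ⟪e, ν⟫} ⊆ f '' closedBall 0 3 := by
    rintro ν ⟨hν, ha : 1 / 2 < ⟪e, ν⟫⟩
    rw [mem_sphere_zero_iff_norm] at hν
    set a := ⟪e, ν⟫
    have ha0 : 0 < a := by linarith
    have hx : a⁻¹ • ν - e ∈ (ℝ ∙ e)ᗮ := by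
      rw [Submodule.mem_orthogonal_singleton_iff_inner_right, inner_sub_right,
        real_inner_smul_right, real_inner_self_eq_norm_sq, he, inv_mul_cancel₀ ha0.ne']
      norm_num
    refine ⟨⟨_, hx⟩, ?_, ?_⟩
    · rw [mem_closedBall_zero_iff, Submodule.coe_norm]
      calc ‖a⁻¹ • ν - e‖ ≤ ‖a⁻¹ • ν‖ + ‖e‖ := norm_sub_le _ _
        _ = a⁻¹ + 1 := by rw [norm_smul, hν, he, mul_one, norm_inv, Real.norm_of_nonneg ha0.le]
        _ ≤ 3 := by linarith [(inv_le_comm₀ ha0 two_pos).mpr (by linarith)]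
    · simp only [f, add_sub_cancel, norm_smul, hν, mul_one, norm_inv, Real.norm_of_nonneg ha0.le,
        inv_inv, smul_smul, mul_inv_cancel₀ ha0.ne', one_smul]
  refine (measure_mono hsub).trans_lt ?_
  refine (hf.hausdorffMeasure_image_le n.cast_nonneg _).trans_lt ?_
  rw [← hK]
  exact ENNReal.mul_lt_top (by simp) (isCompact_closedBall _ _).measure_lt_top

lemma hausdorffMeasure_sphere_lt_top (hn : finrank ℝ E = n + 1) :
    μH[n] (sphere (0 : E) 1) < ⊤ := by
  refine (isCompact_sphere 0 1).measure_lt_top_of_nhdsWithin fun e he => ?_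
  have he1 : ‖e‖ = 1 := by simpa using he
  refine ⟨_, inter_mem_nhdsWithin _ (IsOpen.mem_nhds ?_ ?_),
    hausdorffMeasure_sphere_inter_cap_lt_top hn he1⟩
  · exact isOpen_lt continuous_const (continuous_const.inner continuous_id)
  · show 1 / 2 < ⟪e, e⟫
    rw [real_inner_self_eq_norm_sq, he1]; norm_num

end Sphere

noncomputable def shiftNormalize (u : E) (δ : ℝ) (w : E) : E := ‖w + δ • u‖⁻¹ • (w + δ • u)

noncomputable def unshiftCoeff (δ t : ℝ) : ℝ := δ * t + √(1 - δ ^ 2 + δ ^ 2 * t ^ 2)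

/-- For unit `v`, `unshiftCoeff δ ⟪u, v⟫` is the positive root `c` of `‖c • v - δ • u‖ = 1`,
so `unshift u δ` inverts `shiftNormalize u δ` on the hemisphere `0 ≤ ⟪u, ·⟫`. -/
noncomputable def unshift (u : E) (δ : ℝ) (v : E) : E := unshiftCoeff δ ⟪u, v⟫ • v - δ • u

lemma abs_unshiftCoeff_le {δ t : ℝ} (hδ : 0 ≤ δ) (ht : |t| ≤ 1) :
    |unshiftCoeff δ t| ≤ 1 + δ := by
  have ht2 : t ^ 2 ≤ 1 := by rw [← sq_abs]; exact pow_le_one₀ (abs_nonneg t) ht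
  have hsq : √(1 - δ ^ 2 + δ ^ 2 * t ^ 2) ≤ 1 :=
    Real.sqrt_le_one.mpr (by nlinarith [mul_le_mul_of_nonneg_left ht2 (sq_nonneg δ)])
  have hδt : |δ * t| ≤ δ := by
    rw [abs_mul, abs_of_nonneg hδ]; exact mul_le_of_le_one_right hδ ht
  rw [unshiftCoeff, abs_le]
  constructor <;> linarith [abs_le.1 hδt, Real.sqrt_nonneg (1 - δ ^ 2 + δ ^ 2 * t ^ 2)]

lemma abs_unshiftCoeff_sub_le {δ t t' : ℝ} (hδ0 : 0 ≤ δ) (hδ1 : δ ≤ 1 / 2)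
    (ht : |t| ≤ 1) (ht' : |t'| ≤ 1) :
    |unshiftCoeff δ t - unshiftCoeff δ t'| ≤ 2 * δ * |t - t'| := by
  have hlow : ∀ s : ℝ, 1 / 4 ≤ 1 - δ ^ 2 + δ ^ 2 * s ^ 2 := fun s => by
    nlinarith [sq_nonneg (δ * s)]
  have hsum : |t + t'| ≤ 2 := (abs_add_le t t').trans (by linarith)
  have hsqrt : |√(1 - δ ^ 2 + δ ^ 2 * t ^ 2) - √(1 - δ ^ 2 + δ ^ 2 * t' ^ 2)|
      ≤ δ * |t - t'| := by
    refine (abs_sqrt_sub_sqrt_le (hlow t) (hlow t')).trans ?_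
    rw [show 1 - δ ^ 2 + δ ^ 2 * t ^ 2 - (1 - δ ^ 2 + δ ^ 2 * t' ^ 2)
        = δ ^ 2 * (t + t') * (t - t') by ring, abs_mul, abs_mul, abs_of_nonneg (sq_nonneg δ)]
    have : δ ^ 2 * |t + t'| ≤ δ := by nlinarith [abs_nonneg (t + t')]
    exact mul_le_mul_of_nonneg_right this (abs_nonneg _)
  calc |unshiftCoeff δ t - unshiftCoeff δ t'|
      = |δ * (t - t') + (√(1 - δ ^ 2 + δ ^ 2 * t ^ 2) - √(1 - δ ^ 2 + δ ^ 2 * t' ^ 2))| := by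
        rw [unshiftCoeff, unshiftCoeff]; ring_nf
    _ ≤ δ * |t - t'| + δ * |t - t'| := by
        refine (abs_add_le _ _).trans (add_le_add ?_ hsqrt)
        rw [abs_mul, abs_of_nonneg hδ0]
    _ = 2 * δ * |t - t'| := by ring

lemma lipschitzOnWith_unshift {u : E} (hu : ‖u‖ = 1) {δ : ℝ} (hδ0 : 0 ≤ δ) (hδ1 : δ ≤ 1 / 2) :
    LipschitzOnWith (1 + 3 * δ).toNNReal (unshift u δ) (sphere 0 1) := by
  have hcoeff : LipschitzOnWith (2 * δ).toNNReal (fun v => unshiftCoeff δ ⟪u, v⟫) (sphere 0 1) := by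
    refine LipschitzOnWith.of_dist_le_mul fun v hv v' hv' => ?_
    rw [mem_sphere_zero_iff_norm] at hv hv'
    rw [Real.dist_eq, Real.coe_toNNReal _ (by linarith)]
    refine (abs_unshiftCoeff_sub_le hδ0 hδ1 (abs_real_inner_le_one hu hv)
      (abs_real_inner_le_one hu hv')).trans (mul_le_mul_of_nonneg_left ?_ (by linarith))
    rw [← inner_sub_right, dist_eq_norm]
    exact (abs_real_inner_le_norm _ _).trans_eq (by rw [hu, one_mul])
  have hbound : ∀ v ∈ sphere (0 : E) 1, |unshiftCoeff δ ⟪u, v⟫| ≤ (1 + δ).toNNReal := by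
    intro v hv
    rw [Real.coe_toNNReal _ (by linarith)]
    exact abs_unshiftCoeff_le hδ0 (abs_real_inner_le_one hu (by simpa using hv))
  refine ((hcoeff.smul_self hbound fun v hv => (by simpa using hv : ‖v‖ = 1).le).sub
    (LipschitzWith.const (δ • u)).lipschitzOnWith).weaken ?_
  rw [add_zero, ← Real.toNNReal_add (by linarith) (by linarith)]
  exact Real.toNNReal_le_toNNReal (by linarith)

lemma norm_add_smul_sq {u w : E} (hu : ‖u‖ = 1) (hw : ‖w‖ = 1) (δ : ℝ) :
    ‖w + δ • u‖ ^ 2 = 1 + 2 * δ * ⟪u, w⟫ + δ ^ 2 := by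
  rw [norm_add_sq_real, real_inner_smul_right, norm_smul, Real.norm_eq_abs, mul_pow, sq_abs, hu,
    hw, real_inner_comm]
  ring

lemma one_le_norm_add_smul {u w : E} (hu : ‖u‖ = 1) (hw : ‖w‖ = 1) {δ : ℝ} (hδ : 0 ≤ δ)
    (huw : 0 ≤ ⟪u, w⟫) : 1 ≤ ‖w + δ • u‖ := by
  have := norm_add_smul_sq hu hw δ
  nlinarith [norm_nonneg (w + δ • u), mul_nonneg hδ huw]

lemma unshift_shiftNormalize {u w : E} (hu : ‖u‖ = 1) (hw : ‖w‖ = 1) {δ : ℝ} (hδ : 0 ≤ δ)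
    (huw : 0 ≤ ⟪u, w⟫) : unshift u δ (shiftNormalize u δ w) = w := by
  set ρ := ‖w + δ • u‖
  have hρ : 1 ≤ ρ := one_le_norm_add_smul hu hw hδ huw
  have hρ2 : ρ ^ 2 = 1 + 2 * δ * ⟪u, w⟫ + δ ^ 2 := norm_add_smul_sq hu hw δ
  have ht : ⟪u, shiftNormalize u δ w⟫ = ρ⁻¹ * (⟪u, w⟫ + δ) := by
    rw [shiftNormalize, real_inner_smul_right, inner_add_right, real_inner_smul_right,
      real_inner_self_eq_norm_sq, hu]
    ring
  have hcoeff : unshiftCoeff δ ⟪u, shiftNormalize u δ w⟫ = ρ := by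
    have hsqrt : √(1 - δ ^ 2 + δ ^ 2 * (ρ⁻¹ * (⟪u, w⟫ + δ)) ^ 2) = ρ⁻¹ * (1 + δ * ⟪u, w⟫) := by
      rw [Real.sqrt_eq_iff_mul_self_eq_of_pos (by positivity)]
      field_simp
      linear_combination (δ ^ 2 - 1) * hρ2
    rw [unshiftCoeff, ht, hsqrt]
    field_simp
    linear_combination -hρ2
  rw [unshift, hcoeff, shiftNormalize, smul_smul, mul_inv_cancel₀ (by positivity), one_smul,
    add_sub_cancel_right]

section Cone

variable {C : PointedCone ℝ E} {u : E} {δ : ℝ}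

lemma shiftNormalize_mem (huC : u ∈ C) (hδ : 0 ≤ δ) {w : E} (hw : w ∈ C) :
    shiftNormalize u δ w ∈ C :=
  C.smul_mem (inv_nonneg.2 (norm_nonneg _)) (C.add_mem hw (C.smul_mem hδ huC))

lemma le_inner_shiftNormalize (hu : ‖u‖ = 1) (hδ : 0 ≤ δ) {w : E} (hw : ‖w‖ = 1)
    (huw : 0 ≤ ⟪u, w⟫) : δ / (1 + δ) ≤ ⟪u, shiftNormalize u δ w⟫ := by
  have hρ : 1 ≤ ‖w + δ • u‖ := one_le_norm_add_smul hu hw hδ huw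
  have hρ' : ‖w + δ • u‖ ≤ 1 + δ := (norm_add_le _ _).trans_eq (by
    rw [hw, norm_smul, hu, mul_one, Real.norm_of_nonneg hδ])
  rw [shiftNormalize, real_inner_smul_right, inner_add_right, real_inner_smul_right,
    real_inner_self_eq_norm_sq, hu, one_pow, mul_one, inv_mul_eq_div]
  exact div_le_div₀ (by linarith) (by linarith) (by linarith) hρ'

lemma norm_shiftNormalize (hu : ‖u‖ = 1) (hδ : 0 ≤ δ) {w : E} (hw : ‖w‖ = 1)
    (huw : 0 ≤ ⟪u, w⟫) : ‖shiftNormalize u δ w‖ = 1 :=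
  norm_smul_inv_norm (norm_pos_iff.mp (one_pos.trans_le (one_le_norm_add_smul hu hw hδ huw)))

variable [MeasurableSpace E] [BorelSpace E]

lemma hausdorffMeasure_sphere_inter_cone_inter_nonneg_le (hu : ‖u‖ = 1) (huC : u ∈ C)
    (hδ0 : 0 < δ) (hδ1 : δ ≤ 1 / 2) {d : ℝ} (hd : 0 ≤ d) :
    μH[d] (sphere 0 1 ∩ (C : Set E) ∩ {ν | 0 ≤ ⟪u, ν⟫}) ≤ ENNReal.ofReal (1 + 3 * δ) ^ d *
      μH[d] (sphere 0 1 ∩ (C : Set E) ∩ {ν | δ / (1 + δ) ≤ ⟪u, ν⟫}) := by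
  set P := sphere (0 : E) 1 ∩ (C : Set E) ∩ {ν | δ / (1 + δ) ≤ ⟪u, ν⟫}
  have hsub : sphere 0 1 ∩ (C : Set E) ∩ {ν | 0 ≤ ⟪u, ν⟫} ⊆ unshift u δ '' P := by
    rintro w ⟨⟨hw, hwC⟩, huw : 0 ≤ ⟪u, w⟫⟩
    rw [mem_sphere_zero_iff_norm] at hw
    refine ⟨shiftNormalize u δ w, ⟨⟨?_, shiftNormalize_mem huC hδ0.le hwC⟩,
      le_inner_shiftNormalize hu hδ0.le hw huw⟩, unshift_shiftNormalize hu hw hδ0.le huw⟩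
    rw [mem_sphere_zero_iff_norm, norm_shiftNormalize hu hδ0.le hw huw]
  exact (measure_mono hsub).trans (((lipschitzOnWith_unshift hu hδ0.le hδ1).mono
    (fun ν (hν : ν ∈ P) => hν.1.1)).hausdorffMeasure_image_le hd)

lemma hausdorffMeasure_sphere_inter_cone_inter_nonpos_le (hu : ‖u‖ = 1) (huC : u ∈ C) {d : ℝ}
    (hd : 0 ≤ d) :
    μH[d] (sphere 0 1 ∩ (C : Set E) ∩ {ν | ⟪u, ν⟫ ≤ 0}) ≤
      μH[d] (sphere 0 1 ∩ (C : Set E) ∩ {ν | 0 ≤ ⟪u, ν⟫}) := by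
  set R := (ℝ ∙ u)ᗮ.reflection
  have hmaps : R '' (sphere 0 1 ∩ (C : Set E) ∩ {ν | ⟪u, ν⟫ ≤ 0}) ⊆
      sphere 0 1 ∩ (C : Set E) ∩ {ν | 0 ≤ ⟪u, ν⟫} := by
    rintro _ ⟨v, ⟨⟨hv, hvC⟩, huv : ⟪u, v⟫ ≤ 0⟩, rfl⟩
    have hRv := reflection_orthogonal_singleton_apply hu v
    refine ⟨⟨by simpa [R] using hv, ?_⟩, ?_⟩
    · rw [SetLike.mem_coe, hRv, sub_eq_add_neg, ← neg_smul]
      exact C.add_mem hvC (C.smul_mem (by linarith) huC)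
    · show 0 ≤ ⟪u, R v⟫
      rw [hRv, inner_sub_right, real_inner_smul_right, real_inner_self_eq_norm_sq, hu]
      linarith
  rw [← R.isometry.hausdorffMeasure_image (Or.inl hd)]
  exact measure_mono hmaps

lemma hausdorffMeasure_sphere_inter_cone_le (hu : ‖u‖ = 1) (huC : u ∈ C) (hδ0 : 0 < δ)
    (hδ1 : δ ≤ 1 / 2) {d : ℝ} (hd : 0 ≤ d) :
    μH[d] (sphere 0 1 ∩ (C : Set E)) ≤ 2 * ENNReal.ofReal (1 + 3 * δ) ^ d *
      μH[d] (sphere 0 1 ∩ (C : Set E) ∩ {ν | δ / (1 + δ) ≤ ⟪u, ν⟫}) := by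
  set S := sphere (0 : E) 1 ∩ (C : Set E)
  have hsplit : S ⊆ (S ∩ {ν | 0 ≤ ⟪u, ν⟫}) ∪ (S ∩ {ν | ⟪u, ν⟫ ≤ 0}) := fun ν hν =>
    (le_total 0 ⟪u, ν⟫).imp (fun h => ⟨hν, h⟩) (fun h => ⟨hν, h⟩)
  calc μH[d] S ≤ μH[d] (S ∩ {ν | 0 ≤ ⟪u, ν⟫}) + μH[d] (S ∩ {ν | ⟪u, ν⟫ ≤ 0}) :=
        (measure_mono hsplit).trans (measure_union_le _ _)
    _ ≤ 2 * μH[d] (S ∩ {ν | 0 ≤ ⟪u, ν⟫}) := by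
        rw [two_mul]
        exact add_le_add_right (hausdorffMeasure_sphere_inter_cone_inter_nonpos_le hu huC hd) _
    _ ≤ 2 * (ENNReal.ofReal (1 + 3 * δ) ^ d *
          μH[d] (S ∩ {ν | δ / (1 + δ) ≤ ⟪u, ν⟫})) :=
        mul_le_mul_right (hausdorffMeasure_sphere_inter_cone_inter_nonneg_le hu huC hδ0 hδ1 hd) 2
    _ = _ := (mul_assoc _ _ _).symm

end Cone

section NormalCone

/-- The paper's unit normal cone `N_y X` is `sphere 0 1 ∩ normalCone X y`. -/
def normalCone (X : Set E) (y : E) : PointedCone ℝ E where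
  carrier := {ν | ∀ x ∈ X, ⟪ν, x - y⟫ ≤ 0}
  add_mem' {ν ν'} hν hν' x hx := by
    rw [inner_add_left]; exact add_nonpos (hν x hx) (hν' x hx)
  zero_mem' x _ := by rw [inner_zero_left]
  smul_mem' c ν hν x hx := by
    rw [Nonneg.mk_smul, real_inner_smul_left]
    exact mul_nonpos_of_nonneg_of_nonpos c.2 (hν x hx)

lemma mem_normalCone {X : Set E} {y ν : E} : ν ∈ normalCone X y ↔ ∀ x ∈ X, ⟪ν, x - y⟫ ≤ 0 :=
  Iff.rfl

lemma normalCone_anti {X Y : Set E} (h : X ⊆ Y) (y : E) : normalCone Y y ≤ normalCone X y :=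
  fun _ hν x hx => hν x (h hx)

lemma isClosed_normalCone (X : Set E) (y : E) : IsClosed (normalCone X y : Set E) := by
  have : (normalCone X y : Set E) = ⋂ x ∈ X, {ν | ⟪ν, x - y⟫ ≤ 0} := by
    ext; simp [mem_normalCone]
  rw [this]
  exact isClosed_biInter fun x _ => isClosed_le (continuous_id.inner continuous_const)
    continuous_const

lemma exists_mem_normalCone {F : Set E} (hF : F.Finite) (hne : F.Nonempty) (ν : E) :
    ∃ y ∈ F, ν ∈ normalCone F y := by
  obtain ⟨y, hy, hmax⟩ := F.exists_max_image (fun x => ⟪ν, x⟫) hF hne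
  exact ⟨y, hy, fun x hx => by rw [inner_sub_right]; linarith [hmax x hx]⟩

lemma normalCone_inter_subset_orthogonal {X : Set E} {y y' : E} (hy : y ∈ X) (hy' : y' ∈ X) :
    (normalCone X y : Set E) ∩ normalCone X y' ⊆ (ℝ ∙ (y - y'))ᗮ := by
  rintro ν ⟨hν, hν'⟩
  rw [SetLike.mem_coe, Submodule.mem_orthogonal_singleton_iff_inner_right, real_inner_comm]
  have h := hν y' hy'
  have h' := hν' y hy
  rw [← neg_sub, inner_neg_right] at h
  linarith

lemma mem_normalCone_closure_of_tendsto {ι : Type*} {l : Filter ι} [l.NeBot] {F : ι → Set E}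
    {y : ι → E} {z ν : E} {D : Set E} (hy : Tendsto y l (𝓝 z))
    (hD : ∀ x ∈ D, ∀ᶠ i in l, x ∈ F i) (hν : ∀ᶠ i in l, ν ∈ normalCone (F i) (y i)) :
    ν ∈ normalCone (closure D) z := by
  have hDz : D ⊆ {x | ⟪ν, x - z⟫ ≤ 0} := fun x hx =>
    le_of_tendsto (tendsto_const_nhds.inner (tendsto_const_nhds.sub hy))
      ((hD x hx).and hν |>.mono fun i hi => hi.2 x hi.1)
  exact closure_minimal hDz (isClosed_le (f := fun x => ⟪ν, x - z⟫) (by fun_prop) continuous_const)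

/-- `NX/σ` of the paper, with `0 < ⟪σ y, ν⟫` replaced by `ε ≤ ⟪σ y, ν⟫` so that it is closed
for finite `X`. -/
def restrictedNormalCone (X : Set E) (σ : E → E) (ε : ℝ) : Set E :=
  ⋃ y ∈ X, sphere 0 1 ∩ normalCone X y ∩ {ν | ε ≤ ⟪σ y, ν⟫}

lemma restrictedNormalCone_subset_sphere (X : Set E) (σ : E → E) (ε : ℝ) :
    restrictedNormalCone X σ ε ⊆ sphere 0 1 :=
  iUnion₂_subset fun _ _ => inter_subset_left.trans inter_subset_left

lemma isClosed_restrictedNormalCone {F : Set E} (hF : F.Finite) (σ : E → E) (ε : ℝ) :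
    IsClosed (restrictedNormalCone F σ ε) :=
  hF.isClosed_biUnion fun y _ => (isClosed_sphere.inter (isClosed_normalCone F y)).inter
    (isClosed_le continuous_const (continuous_const.inner continuous_id))

lemma limsup_restrictedNormalCone_subset {X : Set E} (hX : IsCompact X) {σ : E → E}
    (hσ : ContinuousOn σ X) {x : ℕ → E} (hxX : ∀ i, x i ∈ X) (hdense : X ⊆ closure (range x))
    (ε : ℝ) :
    limsup (fun k => restrictedNormalCone (x '' Iic k) σ ε) atTop ⊆
      restrictedNormalCone X σ ε := by
  intro ν hν
  rw [mem_limsup_iff_frequently_mem] at hν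
  obtain ⟨φ, hφ, hφν⟩ := extraction_of_frequently_atTop hν
  simp only [restrictedNormalCone, mem_iUnion₂] at hφν
  choose y hyF hyν using hφν
  have hyX : ∀ k, y k ∈ X := fun k => image_subset_iff.2 (fun i _ => hxX i) (hyF k)
  obtain ⟨z, hzX, ψ, hψ, hyz⟩ := hX.tendsto_subseq hyX
  have hk : Tendsto (φ ∘ ψ) atTop atTop := (hφ.comp hψ).tendsto_atTop
  have hcone : ν ∈ normalCone X z := normalCone_anti hdense z <|
    mem_normalCone_closure_of_tendsto hyz
      (forall_mem_range.2 fun i => (hk.eventually_ge_atTop i).mono fun m hm =>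
        mem_image_of_mem x (mem_Iic.2 hm))
      (Eventually.of_forall fun m => (hyν (ψ m)).1.2)
  have hσz : Tendsto (fun m => ⟪σ (y (ψ m)), ν⟫) atTop (𝓝 ⟪σ z, ν⟫) :=
    ((hσ z hzX).tendsto.comp (tendsto_nhdsWithin_iff.2
      ⟨hyz, Eventually.of_forall fun m => hyX (ψ m)⟩)).inner tendsto_const_nhds
  exact mem_iUnion₂.2 ⟨z, hzX, ⟨(hyν 0).1.1, hcone⟩,
    ge_of_tendsto' hσz fun m => (hyν (ψ m)).2⟩

end NormalCone

section FiniteStage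

variable [MeasurableSpace E] [BorelSpace E] [FiniteDimensional ℝ E] {n : ℕ}

lemma hausdorffMeasure_sphere_le_restrictedNormalCone_of_finite (hn : finrank ℝ E = n + 1)
    {F : Set E} (hF : F.Finite) (hne : F.Nonempty) {σ : E → E}
    (hσ : ∀ y ∈ F, σ y ∈ sphere (0 : E) 1 ∧ σ y ∈ normalCone F y) {δ : ℝ} (hδ0 : 0 < δ)
    (hδ1 : δ ≤ 1 / 2) :
    μH[n] (sphere (0 : E) 1) ≤ 2 * ENNReal.ofReal (1 + 3 * δ) ^ (n : ℝ) *
      μH[n] (restrictedNormalCone F σ (δ / (1 + δ))) := by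
  set S := sphere (0 : E) 1
  set Q : E → Set E := fun y => S ∩ normalCone F y ∩ {ν | δ / (1 + δ) ≤ ⟪σ y, ν⟫}
  have hcover : S ⊆ ⋃ y ∈ F, S ∩ normalCone F y := fun ν hν => by
    obtain ⟨y, hy, hνy⟩ := exists_mem_normalCone hF hne ν
    exact mem_iUnion₂.2 ⟨y, hy, hν, hνy⟩
  have hdisj : F.Pairwise (Function.onFun (AEDisjoint μH[n]) Q) := by
    intro y hy y' hy' hyy'
    refine measure_mono_null ?_
      (hausdorffMeasure_sphere_inter_orthogonal_eq_zero hn (sub_ne_zero.2 hyy'))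
    rintro ν ⟨⟨⟨hν, hνy⟩, -⟩, ⟨-, hνy'⟩, -⟩
    exact ⟨hν, normalCone_inter_subset_orthogonal hy hy' ⟨hνy, hνy'⟩⟩
  have hmeas : ∀ y ∈ F, NullMeasurableSet (Q y) μH[n] := fun y _ =>
    ((isClosed_sphere.inter (isClosed_normalCone F y)).inter
      (isClosed_le continuous_const (continuous_const.inner continuous_id))).nullMeasurableSet
  calc μH[n] S ≤ ∑' y : F, μH[n] (S ∩ normalCone F y) :=
        (measure_mono hcover).trans (measure_biUnion_le _ hF.countable _)
    _ ≤ ∑' y : F, 2 * ENNReal.ofReal (1 + 3 * δ) ^ (n : ℝ) * μH[n] (Q y) :=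
        ENNReal.tsum_le_tsum fun y => hausdorffMeasure_sphere_inter_cone_le
          (mem_sphere_zero_iff_norm.1 (hσ y y.2).1) (hσ y y.2).2 hδ0 hδ1 n.cast_nonneg
    _ = _ := by
        rw [ENNReal.tsum_mul_left, restrictedNormalCone, measure_biUnion₀ hF.countable hdisj hmeas]


lemma hausdorffMeasure_sphere_le_restrictedNormalCone (hn : finrank ℝ E = n + 1)
    {X : Set E} (hX : IsCompact X) (hne : X.Nonempty) {σ : E → E} (hσc : ContinuousOn σ X)
    (hσ : ∀ y ∈ X, σ y ∈ sphere (0 : E) 1 ∧ σ y ∈ normalCone X y) {δ : ℝ} (hδ0 : 0 < δ)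
    (hδ1 : δ ≤ 1 / 2) :
    μH[n] (sphere (0 : E) 1) ≤ 2 * ENNReal.ofReal (1 + 3 * δ) ^ (n : ℝ) *
      μH[n] (restrictedNormalCone X σ (δ / (1 + δ))) := by
  obtain ⟨x, hxX, hdense⟩ := hX.isSeparable.exists_seq_dense hne
  have hF : ∀ k, x '' Iic k ⊆ X := fun k => image_subset_iff.2 fun i _ => hxX i
  set c := 2 * ENNReal.ofReal (1 + 3 * δ) ^ (n : ℝ)
  set A : ℕ → Set E := fun k => restrictedNormalCone (x '' Iic k) σ (δ / (1 + δ))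
  have hstage : ∀ k, μH[n] (sphere (0 : E) 1) ≤ (c • μH[n]) (A k) := fun k =>
    hausdorffMeasure_sphere_le_restrictedNormalCone_of_finite hn ((finite_Iic k).image x)
      (nonempty_Iic.image x)
      (fun y hy => ⟨(hσ y (hF k hy)).1, normalCone_anti (hF k) y (hσ y (hF k hy)).2⟩) hδ0 hδ1
  have hfin : (c • μH[n]) (⋃ k, A k) ≠ ⊤ := by
    refine ENNReal.mul_ne_top (ENNReal.mul_ne_top (by norm_num)
      (ENNReal.rpow_ne_top_of_nonneg n.cast_nonneg ENNReal.ofReal_ne_top)) ?_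
    exact ne_top_of_le_ne_top (hausdorffMeasure_sphere_lt_top hn).ne
      (measure_mono (iUnion_subset fun k => restrictedNormalCone_subset_sphere _ σ _))
  calc μH[n] (sphere (0 : E) 1) ≤ (c • μH[n]) (limsup A atTop) :=
        le_measure_limsup_atTop (fun k => (isClosed_restrictedNormalCone
          ((finite_Iic k).image x) σ _).nullMeasurableSet) hfin hstage
    _ ≤ (c • μH[n]) (restrictedNormalCone X σ (δ / (1 + δ))) :=
        measure_mono (limsup_restrictedNormalCone_subset hX hσc hxX hdense _)
    _ = c * μH[n] (restrictedNormalCone X σ (δ / (1 + δ))) := rfl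

end FiniteStage

end InnerProductSpace

/-- Let `X ⊂ ℝ^(n+1)` be a nonempty compact set and `σ` a continuous selection of unit
normals, `σ(y) ∈ N_y X`.  Then the restricted normal cone
`NX/σ = ⋃_{y∈X}{ν ∈ N_y X : σ(y)·ν > 0}` satisfies `Hⁿ(NX/σ) ≥ (1/2)·Hⁿ(Sⁿ)`. -/
theorem stmt_11 (n : ℕ) (X : Set (EuclideanSpace ℝ (Fin (n+1))))
    (hne : X.Nonempty) (hcp : IsCompact X)
    (σ : EuclideanSpace ℝ (Fin (n+1)) → EuclideanSpace ℝ (Fin (n+1)))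
    (hσc : ContinuousOn σ X)
    (hσ : ∀ y ∈ X, σ y ∈ Metric.sphere (0 : EuclideanSpace ℝ (Fin (n+1))) 1 ∧
      ∀ x ∈ X, (inner ℝ (σ y) (x - y) : ℝ) ≤ 0) :
    μH[(n : ℝ)] (Metric.sphere (0 : EuclideanSpace ℝ (Fin (n+1))) 1) / 2
      ≤ μH[(n : ℝ)] (⋃ y ∈ X, {ν : EuclideanSpace ℝ (Fin (n+1)) |
          ν ∈ Metric.sphere (0 : EuclideanSpace ℝ (Fin (n+1))) 1 ∧
          (∀ x ∈ X, (inner ℝ ν (x - y) : ℝ) ≤ 0) ∧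
          0 < (inner ℝ (σ y) ν : ℝ)}) := by
  refine ENNReal.div_le_of_le_mul'
    (ENNReal.le_of_eventually_le_ofReal_one_add_mul_rpow_mul (c := 3) (d := n) ?_)
  filter_upwards [Ioc_mem_nhdsGT one_half_pos] with δ ⟨hδ0, hδ1⟩
  refine (hausdorffMeasure_sphere_le_restrictedNormalCone finrank_euclideanSpace_fin
    hcp hne hσc hσ hδ0 hδ1).trans ?_
  rw [mul_left_comm, ← mul_assoc]
  gcongr
  exact biUnion_mono subset_rfl fun y _ ν ⟨⟨hν, hνy⟩, hεν⟩ =>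
    ⟨hν, hνy, (by positivity : 0 < δ / (1 + δ)).trans_le hεν⟩
end
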